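/- If φ is a Schwartz function on ℝ such that the family φ_{m,n}(x) = 2^{m/2} φ(2^m x − n), m,n ∈ ℤ, is an orthonormal basis of L²(ℝ), then all moments of φ vanish: ∫_ℝ xⁿ φ(x) dx = 0 for every n ∈ ℕ₀. -/

import Mathlib

open MeasureTheory Filter SchwartzMap
open scoped Real Topology ComplexConjugate SchwartzMap

noncomputable section

/-- An affine function `x ↦ a * x + b` has temperate growth. -/
lemma hasTemperateGrowth_of_affine {g : ℝ → ℝ} (a b : ℝ) (hg : ∀ x, g x = a * x + b) :
    Function.HasTemperateGrowth g := by
  rw [show g = fun x => a * x + b from funext hg]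
  apply Function.HasTemperateGrowth.of_fderiv (k := 1) (C := |a| + |b|)
  · have h : (fderiv ℝ fun x : ℝ => a * x + b) = fun _ : ℝ =>
        (a • (1 : ℝ →L[ℝ] ℝ)) := by
      funext x
      have h1 : HasFDerivAt (fun x : ℝ => a * x + b) (a • (1 : ℝ →L[ℝ] ℝ)) x := by
        exact (((hasFDerivAt_id x).const_mul a).add_const b).congr_fderiv (by ext; simp)
      exact h1.fderiv
    rw [h]
    exact Function.HasTemperateGrowth.const _
  · exact (differentiable_id.const_mul a).add_const b
  · intro x
    have : ‖a * x + b‖ ≤ |a| * |x| + |b| := by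
      rw [Real.norm_eq_abs]
      calc |a * x + b| ≤ |a * x| + |b| := abs_add_le _ _
      _ = |a| * |x| + |b| := by rw [abs_mul]
    refine this.trans ?_
    have hx : |x| = ‖x‖ := rfl
    nlinarith [abs_nonneg a, abs_nonneg b, norm_nonneg x, abs_nonneg x]

lemma upper_of_affine {g : ℝ → ℝ} (a b : ℝ) (ha : a ≠ 0) (hg : ∀ x, g x = a * x + b) :
    ∃ (k : ℕ) (C : ℝ), ∀ x : ℝ, ‖x‖ ≤ C * (1 + ‖g x‖) ^ k := by
  refine ⟨1, (1 + |b|) / |a|, fun x => ?_⟩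
  have ha' : (0:ℝ) < |a| := abs_pos.mpr ha
  rw [hg x, pow_one, div_mul_eq_mul_div, le_div_iff₀ ha', Real.norm_eq_abs, Real.norm_eq_abs]
  have h1 : |a * x| ≤ |a * x + b| + |b| := by
    calc |a * x| = |(a * x + b) - b| := by ring_nf
    _ ≤ |a * x + b| + |b| := abs_sub _ _
  rw [abs_mul] at h1
  nlinarith [abs_nonneg (a * x + b), abs_nonneg b, abs_nonneg x]

/-- The Schwartz function `x ↦ ψ ((x - x₀) / ε)`, for `ε ≠ 0`. -/
def SchwartzMap.dilShift (x₀ ε : ℝ) (hε : ε ≠ 0) (ψ : 𝓢(ℝ, ℂ)) : 𝓢(ℝ, ℂ) :=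
  SchwartzMap.compCLM (𝕜 := ℝ) (g := fun x : ℝ => (x - x₀) / ε)
    (hasTemperateGrowth_of_affine ε⁻¹ (-(x₀ / ε)) (fun x => by field_simp; ring))
    (upper_of_affine ε⁻¹ (-(x₀ / ε)) (inv_ne_zero hε) (fun x => by field_simp; ring)) ψ

/-- The pairing `⟨f(x₀ + ε ·), ψ⟩ = ε⁻¹ ⟨f, ψ((· - x₀)/ε)⟩` (junk value `0` if `ε = 0`). -/
def pairScale (f : 𝓢(ℝ, ℂ) → ℂ) (x₀ ε : ℝ) (ψ : 𝓢(ℝ, ℂ)) : ℂ :=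
  if hε : ε = 0 then 0 else (ε : ℂ)⁻¹ * f (SchwartzMap.dilShift x₀ ε hε ψ)

/-- Complex conjugation of a Schwartz function. -/
def SchwartzMap.conjSM (ψ : 𝓢(ℝ, ℂ)) : 𝓢(ℝ, ℂ) where
  toFun := fun x => conj (ψ x)
  smooth' := Complex.conjLIE.contDiff.comp ψ.smooth'
  decay' := by
    intro k n
    obtain ⟨C, hC⟩ := ψ.decay' k n
    refine ⟨C, fun x => ?_⟩
    have h : ‖iteratedFDeriv ℝ n (fun y => Complex.conjLIE (ψ y)) x‖
        = ‖iteratedFDeriv ℝ n (fun y => ψ y) x‖ :=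
      Complex.conjLIE.norm_iteratedFDeriv_comp_left (fun y => ψ y) x n
    simpa [Complex.conjLIE_apply] using h ▸ hC x

/-- The wavelet family member `φ_{m,n}(x) = 2^(m/2) φ(2^m x - n)` as a Schwartz function. -/
def SchwartzMap.wavelet (φ : 𝓢(ℝ, ℂ)) (m n : ℤ) : 𝓢(ℝ, ℂ) :=
  (2 : ℝ) ^ ((m : ℝ) / 2) •
    SchwartzMap.compCLM (𝕜 := ℝ) (g := fun x : ℝ => (2 : ℝ) ^ m * x - (n : ℝ))
      (hasTemperateGrowth_of_affine ((2:ℝ) ^ m) (-(n : ℝ)) (fun x => by ring))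
      (upper_of_affine ((2:ℝ) ^ m) (-(n : ℝ)) (by positivity) (fun x => by ring)) φ

/-- `φ` is an orthonormal wavelet: the family `φ_{m,n}` is an orthonormal basis of `L²(ℝ)`. -/
def IsOrthonormalWavelet (φ : 𝓢(ℝ, ℂ)) : Prop :=
  (∀ m n m' n' : ℤ, ∫ x : ℝ, φ.wavelet m n x * conj (φ.wavelet m' n' x)
      = if m = m' ∧ n = n' then 1 else 0) ∧
  ∀ h : ℝ → ℂ, MemLp h 2 volume →
    (∀ m n : ℤ, ∫ x : ℝ, h x * conj (φ.wavelet m n x) = 0) → h =ᵐ[volume] 0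

/-- Membership in `S₀(ℝ)`: all moments vanish. -/
def IsS0 (ψ : 𝓢(ℝ, ℂ)) : Prop := ∀ n : ℕ, ∫ x : ℝ, (x : ℂ) ^ n * ψ x = 0

/-- A measurable function positive near `0⁺` slowly varying at the origin. -/
def SlowlyVaryingAtZero (L : ℝ → ℝ) : Prop :=
  Measurable L ∧ (∃ A > (0:ℝ), ∀ x : ℝ, 0 < x → x ≤ A → 0 < L x) ∧
    ∀ a > (0:ℝ), Tendsto (fun ε => L (a * ε) / L ε) (𝓝[>] 0) (𝓝 1)

/-- A measurable function positive near `∞` slowly varying at infinity. -/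
def SlowlyVaryingAtInfty (L : ℝ → ℝ) : Prop :=
  Measurable L ∧ (∃ A > (0:ℝ), ∀ x : ℝ, A ≤ x → 0 < L x) ∧
    ∀ a > (0:ℝ), Tendsto (fun lam => L (a * lam) / L lam) atTop (𝓝 1)

/-- The wavelet coefficient `c_{m,n}^φ(f; ε, x₀) = ⟨f(x₀+ε·), conj(φ_{m,n})⟩`. -/
def waveletCoeff (φ : 𝓢(ℝ, ℂ)) (f : 𝓢(ℝ, ℂ) → ℂ) (ε x₀ : ℝ) (m n : ℤ) : ℂ :=
  pairScale f x₀ ε (φ.wavelet m n).conjSM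

/-!
Orthogonality of `φ = φ_{0,0}` to the finer-scale wavelets `φ_{m,n}`, `m ≥ 1`, reads, after a
change of variables, `∫ φ(t + s y) conj (φ y) dy = 0` with `s = 2⁻ᵐ` and `t = n 2⁻ᵐ`. If the
moments of order `< N` vanish, expanding `φ(t + s y)` to order `N` around `t` leaves
`(sᴺ / N!) φ⁽ᴺ⁾(t) conj (∫ yᴺ φ)`, while the remainder is `O(sᴺ⁺¹)` uniformly in `t`. Hence
`φ⁽ᴺ⁾ · conj (∫ yᴺ φ)` is `O(2⁻ᵐ)` on the dyadic points of level `m`, which are dense, so it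
vanishes. A nonzero `N`-th moment would force `φ⁽ᴺ⁾ = 0`, i.e. `φ` would be a polynomial, and the
only Schwartz polynomial is `0`, contradicting `‖φ‖ = 1`.
-/

namespace SchwartzMap

theorem eq_zero_of_deriv_eq_zero {F : Type*} [NormedAddCommGroup F] [NormedSpace ℝ F]
    (f : 𝓢(ℝ, F)) (hf : deriv f = 0) : f = 0 := by
  ext x
  have hconst : ∀ y, f y = f x := fun y ↦
    is_const_of_deriv_eq_zero f.differentiable (congrFun hf) y x
  have : Tendsto (fun _ : ℝ ↦ f x) (cocompact ℝ) (𝓝 0) := by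
    have := f.tendsto_cocompact
    rwa [show ⇑f = fun _ ↦ f x from funext hconst] at this
  exact tendsto_const_nhds_iff.mp this

theorem eq_zero_of_iteratedDeriv_eq_zero {F : Type*} [NormedAddCommGroup F] [NormedSpace ℝ F]
    {N : ℕ} (f : 𝓢(ℝ, F)) (hf : iteratedDeriv N f = 0) : f = 0 := by
  induction N generalizing f with
  | zero => exact DFunLike.coe_injective (by simpa using hf)
  | succ N ih =>
    refine f.eq_zero_of_deriv_eq_zero ?_
    have : derivCLM ℝ F f = 0 := ih _ (by rwa [iteratedDeriv_succ'] at hf)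
    ext x
    simpa using congrArg (· x) this

theorem integrable_ofReal_pow_mul (g : 𝓢(ℝ, ℂ)) (k : ℕ) :
    Integrable (fun y : ℝ ↦ (y : ℂ) ^ k * g y) :=
  (g.integrable_pow_mul volume k).mono' (by fun_prop) (ae_of_all _ fun y ↦ by simp)

@[simp]
theorem conjSM_apply (ψ : 𝓢(ℝ, ℂ)) (x : ℝ) : ψ.conjSM x = conj (ψ x) := rfl

theorem integral_ofReal_pow_mul_conjSM (ψ : 𝓢(ℝ, ℂ)) (k : ℕ) :
    ∫ y : ℝ, (y : ℂ) ^ k * ψ.conjSM y = conj (∫ y : ℝ, (y : ℂ) ^ k * ψ y) := by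
  rw [← integral_conj]
  simp

theorem wavelet_apply (φ : 𝓢(ℝ, ℂ)) (m n : ℤ) (x : ℝ) :
    φ.wavelet m n x = (((2 : ℝ) ^ ((m : ℝ) / 2) : ℝ) : ℂ) * φ (2 ^ m * x - n) := by
  simp [wavelet, Complex.real_smul]

@[simp]
theorem wavelet_zero_zero (φ : 𝓢(ℝ, ℂ)) : φ.wavelet 0 0 = φ := by
  ext x
  simp [wavelet_apply]

end SchwartzMap

theorem norm_sub_taylorWithinEval_univ_le {E : Type*} [NormedAddCommGroup E] [NormedSpace ℝ E]
    {f : ℝ → E} {n : ℕ} (hf : ContDiff ℝ (n + 1) f) {C : ℝ}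
    (hC : ∀ y, ‖iteratedDeriv (n + 1) f y‖ ≤ C) (t x : ℝ) :
    ‖f x - taylorWithinEval f n Set.univ t x‖ ≤ C * |x - t| ^ (n + 1) / n.factorial := by
  have hderiv : ∀ y, HasDerivAt (fun t ↦ taylorWithinEval f n Set.univ t x)
      (((n.factorial : ℝ)⁻¹ * (x - y) ^ n) • iteratedDeriv (n + 1) f y) y := by
    intro y
    have hdiff : DifferentiableWithinAt ℝ (iteratedDerivWithin n f Set.univ) Set.univ y := by
      rw [iteratedDerivWithin_univ]
      exact (hf.differentiable_iteratedDeriv n (by norm_cast; omega)).differentiableAt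
        |>.differentiableWithinAt
    simpa [iteratedDerivWithin_univ, hasDerivWithinAt_univ] using
      hasDerivWithinAt_taylorWithinEval uniqueDiffOn_univ univ_mem (Set.mem_univ y) subset_rfl
        hf.of_succ.contDiffOn hdiff
  have hbound : ∀ y ∈ Set.uIcc t x,
      ‖((n.factorial : ℝ)⁻¹ * (x - y) ^ n) • iteratedDeriv (n + 1) f y‖
        ≤ (n.factorial : ℝ)⁻¹ * |x - t| ^ n * C := by
    intro y hy
    rw [norm_smul, norm_mul, norm_pow, norm_inv, Real.norm_natCast, Real.norm_eq_abs]
    have := Set.abs_sub_right_of_mem_uIcc hy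
    gcongr
    exact hC y
  have := (convex_uIcc t x).norm_image_sub_le_of_norm_hasDerivWithin_le
    (fun y _ ↦ (hderiv y).hasDerivWithinAt) hbound Set.left_mem_uIcc Set.right_mem_uIcc
  rw [taylorWithinEval_self, Real.norm_eq_abs] at this
  calc _ ≤ (n.factorial : ℝ)⁻¹ * |x - t| ^ n * C * |x - t| := this
    _ = C * |x - t| ^ (n + 1) / n.factorial := by ring

theorem taylorWithinEval_univ_add_mul_mul_eq_sum (f : ℝ → ℂ) (N : ℕ) (t s y : ℝ) (g : ℂ) :
    taylorWithinEval f N Set.univ t (t + s * y) * g = ∑ k ∈ Finset.range (N + 1),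
      ((k.factorial : ℝ)⁻¹ * s ^ k) • (iteratedDeriv k f t * ((y : ℂ) ^ k * g)) := by
  rw [taylor_within_apply, Finset.sum_mul]
  refine Finset.sum_congr rfl fun k _ ↦ ?_
  simp only [iteratedDerivWithin_univ, Complex.real_smul, add_sub_cancel_left]
  push_cast
  ring

theorem integrable_taylorWithinEval_univ_add_mul_mul (f : ℝ → ℂ) (g : 𝓢(ℝ, ℂ)) (N : ℕ)
    (t s : ℝ) : Integrable (fun y ↦ taylorWithinEval f N Set.univ t (t + s * y) * g y) := by
  simp_rw [taylorWithinEval_univ_add_mul_mul_eq_sum]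
  exact integrable_finsetSum _ fun k _ ↦
    (((g.integrable_ofReal_pow_mul k).const_mul _).smul ((k.factorial : ℝ)⁻¹ * s ^ k) :)

theorem integral_taylorWithinEval_univ_add_mul_mul (f : ℝ → ℂ) (g : 𝓢(ℝ, ℂ)) {N : ℕ}
    (hg : ∀ k < N, ∫ y : ℝ, (y : ℂ) ^ k * g y = 0) (t s : ℝ) :
    ∫ y : ℝ, taylorWithinEval f N Set.univ t (t + s * y) * g y
      = ((N.factorial : ℝ)⁻¹ * s ^ N) • (iteratedDeriv N f t * ∫ y : ℝ, (y : ℂ) ^ N * g y) := by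
  simp_rw [taylorWithinEval_univ_add_mul_mul_eq_sum]
  have hint : ∀ k, Integrable (fun y : ℝ ↦
      ((k.factorial : ℝ)⁻¹ * s ^ k) • (iteratedDeriv k f t * ((y : ℂ) ^ k * g y))) :=
    fun k ↦ (((g.integrable_ofReal_pow_mul k).const_mul _).smul ((k.factorial : ℝ)⁻¹ * s ^ k) :)
  rw [integral_finsetSum _ fun k _ ↦ hint k,
    Finset.sum_eq_single_of_mem N (Finset.self_mem_range_succ N)]
  · rw [integral_smul, integral_const_mul]
  · intro k hk hkN
    have hkN : k < N := lt_of_le_of_ne (Finset.mem_range_succ_iff.mp hk) hkN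
    rw [integral_smul, integral_const_mul, hg k hkN, mul_zero, smul_zero]

theorem norm_integral_comp_add_mul_mul_sub_le (f g : 𝓢(ℝ, ℂ)) {N : ℕ}
    (hg : ∀ k < N, ∫ y : ℝ, (y : ℂ) ^ k * g y = 0) {C : ℝ}
    (hC : ∀ x, ‖iteratedDeriv (N + 1) f x‖ ≤ C) (t s : ℝ) :
    ‖(∫ y : ℝ, f (t + s * y) * g y)
        - ((N.factorial : ℝ)⁻¹ * s ^ N) • (iteratedDeriv N f t * ∫ y : ℝ, (y : ℂ) ^ N * g y)‖
      ≤ C * |s| ^ (N + 1) / N.factorial * ∫ y : ℝ, ‖y‖ ^ (N + 1) * ‖g y‖ := by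
  have hTint := integrable_taylorWithinEval_univ_add_mul_mul f g N t s
  have hFint : Integrable (fun y : ℝ ↦ f (t + s * y) * g y) :=
    g.integrable.bdd_mul (by fun_prop) (ae_of_all _ fun y ↦ f.norm_le_seminorm ℝ _)
  have hpointwise : ∀ y : ℝ,
      ‖f (t + s * y) * g y - taylorWithinEval f N Set.univ t (t + s * y) * g y‖
        ≤ C * |s| ^ (N + 1) / N.factorial * (‖y‖ ^ (N + 1) * ‖g y‖) := fun y ↦
    calc _ = ‖f (t + s * y) - taylorWithinEval f N Set.univ t (t + s * y)‖ * ‖g y‖ := by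
          rw [← sub_mul, norm_mul]
      _ ≤ C * |t + s * y - t| ^ (N + 1) / N.factorial * ‖g y‖ := by
          gcongr
          exact norm_sub_taylorWithinEval_univ_le (f.smooth _) hC _ _
      _ = _ := by rw [add_sub_cancel_left, abs_mul, mul_pow, Real.norm_eq_abs]; ring
  calc _ = ‖∫ y : ℝ, f (t + s * y) * g y - taylorWithinEval f N Set.univ t (t + s * y) * g y‖ := by
        rw [integral_sub hFint hTint, integral_taylorWithinEval_univ_add_mul_mul f g hg]
    _ ≤ ∫ y : ℝ, C * |s| ^ (N + 1) / N.factorial * (‖y‖ ^ (N + 1) * ‖g y‖) :=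
        norm_integral_le_of_norm_le ((g.integrable_pow_mul volume (N + 1)).const_mul _)
          (ae_of_all _ hpointwise)
    _ = _ := integral_const_mul _ _

theorem eq_zero_of_norm_apply_dyadic_le {E : Type*} [NormedAddCommGroup E] {h : ℝ → E}
    (hh : Continuous h) {K : ℝ} (hK : ∀ m : ℕ, 0 < m → ∀ n : ℤ, ‖h (n / 2 ^ m)‖ ≤ K / 2 ^ m) :
    h = 0 := by
  funext x
  set t : ℕ → ℝ := fun m ↦ (⌊2 ^ m * x⌋ : ℝ) / 2 ^ m
  have hinv : Tendsto (fun m : ℕ ↦ ((2 : ℝ) ^ m)⁻¹) atTop (𝓝 0) :=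
    tendsto_inv_atTop_zero.comp (tendsto_pow_atTop_atTop_of_one_lt one_lt_two)
  have hdist : ∀ m, dist (t m) x ≤ ((2 : ℝ) ^ m)⁻¹ := fun m ↦ by
    have : t m - x = -Int.fract (2 ^ m * x) / 2 ^ m := by
      simp only [t, Int.fract]
      field_simp
      ring
    rw [Real.dist_eq, this, abs_div, abs_neg, abs_of_nonneg (Int.fract_nonneg _),
      abs_of_pos (by positivity), div_eq_mul_inv]
    exact mul_le_of_le_one_left (by positivity) (Int.fract_lt_one _).le
  have ht : Tendsto t atTop (𝓝 x) :=
    tendsto_iff_dist_tendsto_zero.2 (squeeze_zero (fun _ ↦ dist_nonneg) hdist hinv)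
  have hsmall : Tendsto (fun m ↦ h (t m)) atTop (𝓝 0) :=
    squeeze_zero_norm'
      (eventually_atTop.2 ⟨1, fun m hm ↦ (hK m hm _).trans_eq (div_eq_mul_inv _ _)⟩)
      (by simpa using hinv.const_mul K)
  exact tendsto_nhds_unique ((hh.tendsto x).comp ht) hsmall

namespace IsOrthonormalWavelet

open SchwartzMap

variable {φ : 𝓢(ℝ, ℂ)}

theorem ne_zero (hφ : IsOrthonormalWavelet φ) : φ ≠ 0 := by
  rintro rfl
  simpa using hφ.1 0 0 0 0

theorem integral_mul_conj_comp_eq_zero (hφ : IsOrthonormalWavelet φ) {m : ℤ} (hm : m ≠ 0)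
    (n : ℤ) : ∫ x : ℝ, φ x * conj (φ (2 ^ m * x - n)) = 0 := by
  have h := hφ.1 0 0 m n
  rw [if_neg fun h ↦ hm h.1.symm, wavelet_zero_zero] at h
  simp_rw [wavelet_apply, map_mul, Complex.conj_ofReal, mul_left_comm (φ _),
    integral_const_mul] at h
  exact (mul_eq_zero.1 h).resolve_left (by exact_mod_cast (Real.rpow_pos_of_pos two_pos _).ne')

theorem integral_comp_div_mul_conj_eq_zero (hφ : IsOrthonormalWavelet φ) {m : ℤ} (hm : m ≠ 0)
    (n : ℤ) : ∫ y : ℝ, φ ((y + n) / 2 ^ m) * conj (φ y) = 0 := by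
  set G : ℝ → ℂ := fun z ↦ φ (z / 2 ^ m) * conj (φ (z - n))
  have hG : ∫ z, G z = 0 := by
    have h := hφ.integral_mul_conj_comp_eq_zero hm n
    have hpos : (0 : ℝ) < 2 ^ m := by positivity
    simp_rw [show ∀ x : ℝ, φ x * conj (φ (2 ^ m * x - n)) = G (2 ^ m * x) from fun x ↦ by
      simp [G, hpos.ne'], Measure.integral_comp_mul_left G] at h
    exact (smul_eq_zero.1 h).resolve_left (by simp [hpos.ne'])
  rw [← integral_add_right_eq_self G (n : ℝ)] at hG
  simpa [G] using hG

theorem norm_iteratedDeriv_dyadic_mul_moment_le (hφ : IsOrthonormalWavelet φ) {N : ℕ}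
    (hmom : ∀ k < N, ∫ x : ℝ, (x : ℂ) ^ k * φ x = 0) :
    ∃ K, ∀ m : ℕ, 0 < m → ∀ n : ℤ,
      ‖iteratedDeriv N φ (n / 2 ^ m) * conj (∫ x : ℝ, (x : ℂ) ^ N * φ x)‖ ≤ K / 2 ^ m := by
  have hmom_conj : ∀ k < N, ∫ y : ℝ, (y : ℂ) ^ k * φ.conjSM y = 0 := fun k hk ↦ by
    rw [integral_ofReal_pow_mul_conjSM, hmom k hk, map_zero]
  refine ⟨SchwartzMap.seminorm ℝ 0 (N + 1) φ * ∫ y : ℝ, ‖y‖ ^ (N + 1) * ‖φ.conjSM y‖,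
    fun m hm n ↦ ?_⟩
  set s : ℝ := (2 ^ m)⁻¹
  have hs : 0 < s := by positivity
  have hI : ∫ y : ℝ, φ (n / 2 ^ m + s * y) * φ.conjSM y = 0 := by
    have := hφ.integral_comp_div_mul_conj_eq_zero (m := m) (by exact_mod_cast hm.ne') n
    simp only [zpow_natCast] at this
    convert this using 4 with y
    · simp only [s]
      congr 1
      ring
    · simp
  have htaylor := norm_integral_comp_add_mul_mul_sub_le φ φ.conjSM hmom_conj
    (fun x ↦ by simpa using φ.le_seminorm' ℝ 0 (N + 1) x) (n / 2 ^ m) s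
  rw [hI, zero_sub, norm_neg, norm_smul, integral_ofReal_pow_mul_conjSM, Real.norm_eq_abs,
    abs_of_pos (by positivity), abs_of_pos hs] at htaylor
  have hfac : (0 : ℝ) < (N.factorial : ℝ)⁻¹ * s ^ N := by positivity
  refine le_of_mul_le_mul_left (htaylor.trans_eq ?_) hfac
  rw [div_eq_mul_inv _ ((2 : ℝ) ^ m)]
  ring

end IsOrthonormalWavelet

/-- If `φ` is a Schwartz function such that the family
`φ_{m,n}(x) = 2^{m/2} φ(2^m x − n)`, `m,n ∈ ℤ`, is an orthonormal basis of `L²(ℝ)`,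
then all moments of `φ` vanish: `∫ xⁿ φ(x) dx = 0` for every `n ∈ ℕ`. -/
theorem moments_vanish_of_orthonormal_wavelet
    (φ : 𝓢(ℝ, ℂ)) (hφwav : IsOrthonormalWavelet φ) :
    ∀ n : ℕ, ∫ x : ℝ, (x : ℂ) ^ n * φ x = 0 := by
  intro n
  induction n using Nat.strong_induction_on with
  | _ n ih =>
  by_contra hn
  obtain ⟨K, hK⟩ := hφwav.norm_iteratedDeriv_dyadic_mul_moment_le ih
  have hcont : Continuous (iteratedDeriv n φ) :=
    (φ.smooth ⊤).continuous_iteratedDeriv n (by exact_mod_cast le_top)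
  have hzero := congrFun (eq_zero_of_norm_apply_dyadic_le (hcont.mul continuous_const) hK)
  have hderiv : iteratedDeriv n φ = 0 := funext fun x ↦
    (mul_eq_zero.1 (hzero x)).resolve_right (by simpa using hn)
  exact hφwav.ne_zero (φ.eq_zero_of_iteratedDeriv_eq_zero hderiv)

end
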